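/- arXiv:1306.1185 — 2 statements merged into one kernel-verified Lean document; each statement's English description precedes it below -/
import Mathlib

section
/- (Theorem 1) Let A be a nonempty proper subset of V and let f = 1_A be its indicator function, with k + 1 ≤ N where k = ⌊N/(λ+1)⌋. Then ‖f‖_TV / ‖f − med_λ(f)·1‖_{1,λ} = 2·Cut(A, A^c) / min{λ|A|, |A^c|}. -/
/-- Total variation of a vertex function on the weighted graph with weights `w`. -/
def totalVariation (N : ℕ) (w : Fin N → Fin N → ℝ) (f : Fin N → ℝ) : ℝ :=
  ∑ i, ∑ j, w i j * |f i - f j|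

/-- Cut value between `A` and its complement. -/
def cutValue (N : ℕ) (w : Fin N → Fin N → ℝ) (A : Finset (Fin N)) : ℝ :=
  ∑ i ∈ A, ∑ j ∈ Aᶜ, w i j

/-- Asymmetric absolute value: `|t|_λ = λt` if `t ≥ 0` and `-t` if `t < 0`. -/
noncomputable def asymAbs (lam t : ℝ) : ℝ := if 0 ≤ t then lam * t else -t

/-- Asymmetric ℓ¹-norm: `‖f‖_{1,λ} = ∑ i, |f xᵢ|_λ`. -/
noncomputable def asymNorm (N : ℕ) (lam : ℝ) (f : Fin N → ℝ) : ℝ := ∑ i, asymAbs lam (f i)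

/-- The λ-median of `f`: the (k+1)-st largest entry (counted with multiplicity)
of the vector `(f x₁, …, f x_N)`, where `k = ⌊N/(λ+1)⌋`. -/
noncomputable def lamMedian (N : ℕ) (lam : ℝ) (f : Fin N → ℝ) : ℝ :=
  ((Finset.univ.val.map f).sort (· ≥ ·)).getD (Nat.floor ((N : ℝ) / (lam + 1))) 0

/-- Indicator function of `A`. -/
def indicatorFun (N : ℕ) (A : Finset (Fin N)) : Fin N → ℝ :=
  fun i => if i ∈ A then 1 else 0

/-!
For `f = 1_A` the difference `|f i - f j|` is `1` exactly on the edges crossing the cut, so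
`‖f‖_TV = Cut(A, Aᶜ) + Cut(Aᶜ, A) = 2 Cut(A, Aᶜ)` by symmetry of `w`. Sorted decreasingly, the
values of `f` are `|A|` ones followed by `|Aᶜ|` zeros, so `med_λ f = 1` exactly when
`k < |A|`, which unwinds to `|Aᶜ| < λ|A|`. Then `‖f - 1‖_{1,λ} = |Aᶜ|`; otherwise
`med_λ f = 0` and `‖f‖_{1,λ} = λ|A|`. In both cases this is `min {λ|A|, |Aᶜ|}`.
-/

theorem List.getD_replicate_append_replicate {α : Type*} (m n k : ℕ) (a b : α) :
    (replicate m a ++ replicate n b).getD k b = if k < m then a else b := by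
  grind

theorem Nat.floor_div_add_one_lt_iff {lam : ℝ} (hlam : 0 < lam) {a b n : ℕ} (hab : a + b = n) :
    ⌊(n : ℝ) / (lam + 1)⌋₊ < a ↔ (b : ℝ) < lam * a := by
  have hn : (n : ℝ) = a + b := by exact_mod_cast hab.symm
  rw [Nat.floor_lt (by positivity), div_lt_iff₀ (by positivity), hn]
  constructor <;> intro h <;> linarith

namespace indicatorFun

variable {N : ℕ} {A : Finset (Fin N)} {i : Fin N}

theorem apply_of_mem (hi : i ∈ A) : indicatorFun N A i = 1 :=
  if_pos hi

theorem apply_of_notMem (hi : i ∉ A) : indicatorFun N A i = 0 :=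
  if_neg hi

variable (A)

theorem compl_apply (i : Fin N) : indicatorFun N Aᶜ i = 1 - indicatorFun N A i := by
  by_cases hi : i ∈ A <;> simp [indicatorFun, hi]

theorem sum_eq_card : ∑ i, indicatorFun N A i = A.card := by
  simp [indicatorFun]

theorem map_univ_val :
    Finset.univ.val.map (indicatorFun N A)
      = Multiset.replicate A.card 1 + Multiset.replicate Aᶜ.card 0 := by
  have hsplit : (Finset.univ : Finset (Fin N)).val = A.val + Aᶜ.val :=
    congrArg Finset.val
      (by simp [Finset.disjUnion_eq_union] : Finset.univ = A.disjUnion Aᶜ disjoint_compl_right)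
  rw [hsplit, Multiset.map_add, Multiset.map_congr rfl fun _ hi => apply_of_mem hi,
    Multiset.map_congr rfl fun _ hi => apply_of_notMem (Finset.mem_compl.mp hi),
    Multiset.map_const', Multiset.map_const', Finset.card_val, Finset.card_val]

theorem sort_map_univ_val :
    (Finset.univ.val.map (indicatorFun N A)).sort (· ≥ ·)
      = List.replicate A.card 1 ++ List.replicate Aᶜ.card 0 := by
  have hsorted :
      (List.replicate A.card (1 : ℝ) ++ List.replicate Aᶜ.card 0).Pairwise (· ≥ ·) := by
    simp [List.pairwise_append, List.pairwise_replicate]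
  rw [map_univ_val, ← Multiset.coe_replicate, ← Multiset.coe_replicate, Multiset.coe_add,
    Multiset.coe_sort, List.mergeSort_eq_self _ hsorted]

theorem lamMedian_eq (lam : ℝ) :
    lamMedian N lam (indicatorFun N A)
      = if ⌊(N : ℝ) / (lam + 1)⌋₊ < A.card then 1 else 0 := by
  rw [lamMedian, sort_map_univ_val, List.getD_replicate_append_replicate]

theorem abs_sub_compl (i j : Fin N) :
    |indicatorFun N Aᶜ i - indicatorFun N Aᶜ j| = |indicatorFun N A i - indicatorFun N A j| := by
  rw [compl_apply, compl_apply, sub_sub_sub_cancel_left, abs_sub_comm]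

theorem sum_mul_abs_sub_of_mem (w : Fin N → Fin N → ℝ) (hi : i ∈ A) :
    ∑ j, w i j * |indicatorFun N A i - indicatorFun N A j| = ∑ j ∈ Aᶜ, w i j := by
  rw [← Finset.sum_add_sum_compl A, Finset.sum_eq_zero fun j hj => by
    simp [apply_of_mem hi, apply_of_mem hj], zero_add]
  refine Finset.sum_congr rfl fun j hj => ?_
  simp [apply_of_mem hi, apply_of_notMem (Finset.mem_compl.mp hj)]

theorem totalVariation_eq_cutValue_add (w : Fin N → Fin N → ℝ) :
    totalVariation N w (indicatorFun N A) = cutValue N w A + cutValue N w Aᶜ := by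
  rw [totalVariation, ← Finset.sum_add_sum_compl A]
  congr 1
  · exact Finset.sum_congr rfl fun i hi => sum_mul_abs_sub_of_mem A w hi
  · refine Finset.sum_congr rfl fun i hi => ?_
    simp_rw [← abs_sub_compl A i]
    rw [sum_mul_abs_sub_of_mem Aᶜ w hi, compl_compl]

theorem asymNorm_eq (lam : ℝ) : asymNorm N lam (indicatorFun N A) = lam * A.card := by
  have hterm (i : Fin N) : asymAbs lam (indicatorFun N A i) = lam * indicatorFun N A i := by
    by_cases hi : i ∈ A <;> simp [asymAbs, indicatorFun, hi]
  simp only [asymNorm, hterm, ← Finset.mul_sum, sum_eq_card]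

theorem asymNorm_sub_one (lam : ℝ) :
    asymNorm N lam (fun i => indicatorFun N A i - 1) = Aᶜ.card := by
  have hterm (i : Fin N) : asymAbs lam (indicatorFun N A i - 1) = indicatorFun N Aᶜ i := by
    by_cases hi : i ∈ A <;> simp [asymAbs, indicatorFun, hi]
  simp only [asymNorm, hterm, sum_eq_card]

end indicatorFun

theorem cutValue_compl {N : ℕ} {w : Fin N → Fin N → ℝ} (hsymm : ∀ i j, w i j = w j i)
    (A : Finset (Fin N)) : cutValue N w Aᶜ = cutValue N w A := by
  rw [cutValue, cutValue, compl_compl, Finset.sum_comm]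
  simp only [hsymm]

theorem tv_ratio_eq_balanced_cut_general (N : ℕ) (w : Fin N → Fin N → ℝ)
    (hsymm : ∀ i j, w i j = w j i)
    (lam : ℝ) (hlam : 0 < lam)
    (A : Finset (Fin N)) :
    totalVariation N w (indicatorFun N A) /
        asymNorm N lam
          (fun i => indicatorFun N A i - lamMedian N lam (indicatorFun N A))
      = 2 * cutValue N w A / min (lam * (A.card : ℝ)) ((Aᶜ.card : ℝ)) := by
  have hcard : A.card + Aᶜ.card = N := A.card_add_card_compl.trans (Fintype.card_fin N)
  rw [indicatorFun.totalVariation_eq_cutValue_add, cutValue_compl hsymm, ← two_mul,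
    indicatorFun.lamMedian_eq]
  by_cases h : ⌊(N : ℝ) / (lam + 1)⌋₊ < A.card
  · have hlt := (Nat.floor_div_add_one_lt_iff hlam hcard).mp h
    rw [if_pos h, indicatorFun.asymNorm_sub_one, min_eq_right hlt.le]
  · have hle := not_lt.mp <| (Nat.floor_div_add_one_lt_iff hlam hcard).not.mp h
    simp only [if_neg h, sub_zero]
    rw [indicatorFun.asymNorm_eq, min_eq_left hle]

/-- Theorem 1: for a nonempty proper subset `A` and `f = 1_A`,
`‖f‖_TV / ‖f − med_λ(f)·1‖_{1,λ} = 2 Cut(A, Aᶜ) / min{λ|A|, |Aᶜ|}`. -/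
theorem tv_ratio_eq_balanced_cut (N : ℕ) (hN : 0 < N) (w : Fin N → Fin N → ℝ)
    (hsymm : ∀ i j, w i j = w j i) (hnonneg : ∀ i j, 0 ≤ w i j)
    (lam : ℝ) (hlam : 0 < lam)
    (hk : Nat.floor ((N : ℝ) / (lam + 1)) + 1 ≤ N)
    (A : Finset (Fin N)) (hA : A.Nonempty) (hAproper : A ≠ Finset.univ) :
    totalVariation N w (indicatorFun N A) /
        asymNorm N lam
          (fun i => indicatorFun N A i - lamMedian N lam (indicatorFun N A))
      = 2 * cutValue N w A / min (lam * (A.card : ℝ)) ((Aᶜ.card : ℝ)) :=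
  tv_ratio_eq_balanced_cut_general N w hsymm lam hlam A
end

section
/- (Theorem 2, subgradient formula) Let f ∈ ℝ^N, and set n⁰ = #{i : f(x_i) = med_λ(f)}, n⁻ = #{i : f(x_i) < med_λ(f)}, n⁺ = #{i : f(x_i) > med_λ(f)}. Define v ∈ ℝ^N by v(x_i) = λ if f(x_i) > med_λ(f), v(x_i) = (n⁻ − λn⁺)/n⁰ if f(x_i) = med_λ(f), and v(x_i) = −1 if f(x_i) < med_λ(f). Then for every g ∈ ℝ^N, B(g) − B(f) ≥ ⟨v, g − f⟩, where B(f) := ‖f − med_λ(f)·1‖_{1,λ}; i.e., v is a subgradient of B at f. -/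
/-- The balance functional `B(f) = ‖f − med_λ(f)·1‖_{1,λ}`. -/
noncomputable def balanceFun (N : ℕ) (lam : ℝ) (f : Fin N → ℝ) : ℝ :=
  asymNorm N lam (fun i => f i - lamMedian N lam f)

/-- The subgradient vector of `B` at `f` from Theorem 2: entries `λ` above the λ-median,
`−1` below it, and `(n⁻ − λn⁺)/n⁰` at it, where `n⁰, n⁻, n⁺` count the entries of `f`
equal to, below and above the λ-median respectively. -/
noncomputable def medSubgrad (N : ℕ) (lam : ℝ) (f : Fin N → ℝ) : Fin N → ℝ := fun i =>
  if lamMedian N lam f < f i then lam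
  else if f i < lamMedian N lam f then -1
  else
    (((Finset.univ.filter fun j => f j < lamMedian N lam f).card : ℝ) -
        lam * ((Finset.univ.filter fun j => lamMedian N lam f < f j).card : ℝ)) /
      ((Finset.univ.filter fun j => f j = lamMedian N lam f).card : ℝ)

/-!
Write `m = med_λ(f)`. The vector `v` takes values in `[-1, λ]`, so `⟨v, h⟩ ≤ ‖h‖_{1,λ}` for
every `h`; it is aligned with `f - m·1`, i.e. `⟨v, f - m·1⟩ = ‖f - m·1‖_{1,λ}`; and `∑ v = 0`, so
`⟨v, ·⟩` ignores constant shifts. Hence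
`⟨v, g - f⟩ = ⟨v, g - med_λ(g)·1⟩ - ⟨v, f - m·1⟩ ≤ B(g) - B(f)`.
The choice of `k` enters only through the value of `v` at the median: `(n⁻ - λn⁺)/n⁰ ∈ [-1, λ]`
amounts to `(λ+1)n⁺ ≤ N ≤ (λ+1)(n⁰+n⁺)`, which follows from `n⁺ ≤ k < n⁰ + n⁺`, the defining
property of the `(k+1)`-st largest entry.
-/

open Finset

theorem asymAbs_of_nonneg {lam t : ℝ} (ht : 0 ≤ t) : asymAbs lam t = lam * t := if_pos ht

theorem asymAbs_of_neg {lam t : ℝ} (ht : t < 0) : asymAbs lam t = -t := if_neg ht.not_ge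

theorem mul_le_asymAbs {lam c : ℝ} (hc : c ∈ Set.Icc (-1) lam) (t : ℝ) :
    c * t ≤ asymAbs lam t := by
  rcases le_or_gt 0 t with ht | ht
  · rw [asymAbs_of_nonneg ht]
    exact mul_le_mul_of_nonneg_right hc.2 ht
  · rw [asymAbs_of_neg ht]
    nlinarith [hc.1]

theorem sum_mul_sub_le_asymNorm_sub {N : ℕ} {lam m : ℝ} {v f : Fin N → ℝ}
    (hv : ∀ i, v i ∈ Set.Icc (-1) lam) (hsum : ∑ i, v i = 0)
    (hf : ∀ i, v i * (f i - m) = asymAbs lam (f i - m)) (g : Fin N → ℝ) (c : ℝ) :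
    ∑ i, v i * (g i - f i)
      ≤ asymNorm N lam (fun i => g i - c) - asymNorm N lam (fun i => f i - m) := by
  calc ∑ i, v i * (g i - f i)
      = ∑ i, (v i * (g i - c) - v i * (f i - m)) + (c - m) * ∑ i, v i := by
        rw [mul_sum, ← sum_add_distrib]
        exact sum_congr rfl fun i _ => by ring
    _ = ∑ i, (v i * (g i - c) - v i * (f i - m)) := by rw [hsum, mul_zero, add_zero]
    _ ≤ ∑ i, (asymAbs lam (g i - c) - asymAbs lam (f i - m)) :=
        sum_le_sum fun i _ => by rw [hf i]; linarith [mul_le_asymAbs (hv i) (g i - c)]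
    _ = _ := sum_sub_distrib _ _

theorem List.Sublist.length_le_countP {α : Type*} {l₁ l₂ : List α} {p : α → Bool}
    (h : l₁.Sublist l₂) (hp : ∀ a ∈ l₁, p a) : l₁.length ≤ l₂.countP p :=
  List.countP_eq_length.mpr hp ▸ h.countP_le

namespace List.SortedGE

variable {α : Type*} [LinearOrder α] {l : List α} {k : ℕ}

theorem lt_countP_le_getElem (hl : l.SortedGE) (hk : k < l.length) :
    k < l.countP (l[k] ≤ ·) := by
  have htake := (l.take_sublist (k + 1)).length_le_countP (p := (l[k] ≤ ·)) fun a ha => by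
    obtain ⟨j, hj, rfl⟩ := List.mem_iff_getElem.mp ha
    simp only [List.length_take, List.getElem_take, decide_eq_true_eq] at hj ⊢
    exact hl.getElem_ge_getElem_of_le (by omega)
  simp only [List.length_take] at htake
  omega

theorem countP_getElem_lt_le (hl : l.SortedGE) (hk : k < l.length) :
    l.countP (l[k] < ·) ≤ k := by
  have hdrop := (l.drop_sublist k).length_le_countP (p := (· ≤ l[k])) fun a ha => by
    obtain ⟨j, hj, rfl⟩ := List.mem_iff_getElem.mp ha
    simp only [List.length_drop, List.getElem_drop, decide_eq_true_eq] at hj ⊢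
    exact hl.getElem_ge_getElem_of_le (by omega)
  have hsplit := List.length_eq_countP_add_countP (l[k] < ·) (l := l)
  simp only [List.length_drop, decide_eq_true_eq, not_lt] at hdrop hsplit
  omega

end List.SortedGE

theorem Multiset.countP_sort {α : Type*} (s : Multiset α) (r : α → α → Prop) [DecidableRel r]
    [IsTrans α r] [Std.Antisymm r] [Std.Total r] (p : α → Prop) [DecidablePred p] :
    (s.sort r).countP p = s.countP p := by
  conv_rhs => rw [← s.sort_eq r]
  rw [Multiset.coe_countP]

theorem Finset.card_filter_comp_eq_countP_sort {ι α : Type*} [Fintype ι] (f : ι → α)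
    (r : α → α → Prop) [DecidableRel r] [IsTrans α r] [Std.Antisymm r] [Std.Total r]
    (p : α → Prop) [DecidablePred p] :
    #{i | p (f i)} = ((univ.val.map f).sort r).countP p := by
  rw [Multiset.countP_sort, Multiset.countP_map]
  rfl

theorem Finset.card_filter_le_eq_card_filter_eq_add {ι α : Type*} [Fintype ι] [LinearOrder α]
    (f : ι → α) (c : α) : #{i | c ≤ f i} = #{i | f i = c} + #{i | c < f i} := by
  rw [← card_filter_add_card_filter_not (s := {i | c ≤ f i}) (fun i => f i = c), filter_filter,
    filter_filter]
  congr 2 <;> ext i <;> simp only [mem_filter, mem_univ, true_and] <;> grind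

theorem Finset.card_filter_lt_add_card_filter_le {ι α : Type*} [Fintype ι] [LinearOrder α]
    (f : ι → α) (c : α) : #{i | f i < c} + #{i | c ≤ f i} = Fintype.card ι := by
  simpa [not_le, add_comm] using card_filter_add_card_filter_not (s := univ) (fun i => c ≤ f i)

section lamMedian

variable {N : ℕ} {lam : ℝ} (f : Fin N → ℝ)

theorem lamMedian_eq_getElem (hk : ⌊(N : ℝ) / (lam + 1)⌋₊ < N) :
    lamMedian N lam f
      = ((univ.val.map f).sort (· ≥ ·))[⌊(N : ℝ) / (lam + 1)⌋₊]'(by simpa using hk) :=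
  List.getD_eq_getElem _ _ _

theorem exists_eq_lamMedian (hk : ⌊(N : ℝ) / (lam + 1)⌋₊ < N) :
    ∃ i, f i = lamMedian N lam f := by
  have := (lamMedian_eq_getElem f hk).symm ▸ List.getElem_mem (by simpa using hk)
  simpa using this

theorem card_lamMedian_lt_le (hk : ⌊(N : ℝ) / (lam + 1)⌋₊ < N) :
    #{i | lamMedian N lam f < f i} ≤ ⌊(N : ℝ) / (lam + 1)⌋₊ := by
  rw [card_filter_comp_eq_countP_sort f (· ≥ ·), lamMedian_eq_getElem f hk]
  exact (Multiset.pairwise_sort _ _).sortedGE.countP_getElem_lt_le _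

theorem card_eq_lamMedian_pos (hk : ⌊(N : ℝ) / (lam + 1)⌋₊ < N) :
    0 < #{i | f i = lamMedian N lam f} :=
  let ⟨j, hj⟩ := exists_eq_lamMedian f hk
  card_pos.mpr ⟨j, by simpa using hj⟩

theorem lt_card_lamMedian_le (hk : ⌊(N : ℝ) / (lam + 1)⌋₊ < N) :
    ⌊(N : ℝ) / (lam + 1)⌋₊ < #{i | lamMedian N lam f ≤ f i} := by
  rw [card_filter_comp_eq_countP_sort f (· ≥ ·), lamMedian_eq_getElem f hk]
  exact (Multiset.pairwise_sort _ _).sortedGE.lt_countP_le_getElem _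

theorem lam_add_one_mul_card_lamMedian_lt_le (hlam : 0 < lam + 1)
    (hk : ⌊(N : ℝ) / (lam + 1)⌋₊ < N) :
    (lam + 1) * #{i | lamMedian N lam f < f i} ≤ N :=
  calc (lam + 1) * #{i | lamMedian N lam f < f i}
      ≤ (lam + 1) * ⌊(N : ℝ) / (lam + 1)⌋₊ := by
        gcongr
        exact_mod_cast card_lamMedian_lt_le f hk
    _ ≤ N := (le_div_iff₀' hlam).mp (Nat.floor_le (by positivity))

theorem lt_lam_add_one_mul_card_lamMedian_le (hlam : 0 < lam + 1)
    (hk : ⌊(N : ℝ) / (lam + 1)⌋₊ < N) :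
    N < (lam + 1) * #{i | lamMedian N lam f ≤ f i} :=
  calc (N : ℝ) < (lam + 1) * (⌊(N : ℝ) / (lam + 1)⌋₊ + 1) :=
        (div_lt_iff₀' hlam).mp (Nat.lt_floor_add_one _)
    _ ≤ (lam + 1) * #{i | lamMedian N lam f ≤ f i} := by
        gcongr
        exact_mod_cast lt_card_lamMedian_le f hk

end lamMedian

section medSubgrad

variable {N : ℕ} {lam : ℝ}

theorem medSubgrad_of_lamMedian_lt {f : Fin N → ℝ} {i : Fin N} (h : lamMedian N lam f < f i) :
    medSubgrad N lam f i = lam :=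
  if_pos h

theorem medSubgrad_of_lt_lamMedian {f : Fin N → ℝ} {i : Fin N} (h : f i < lamMedian N lam f) :
    medSubgrad N lam f i = -1 :=
  (if_neg h.not_gt).trans (if_pos h)

theorem medSubgrad_of_eq_lamMedian {f : Fin N → ℝ} {i : Fin N} (h : f i = lamMedian N lam f) :
    medSubgrad N lam f i =
      (#{j | f j < lamMedian N lam f} - lam * #{j | lamMedian N lam f < f j}) /
        #{j | f j = lamMedian N lam f} :=
  (if_neg h.not_gt).trans (if_neg h.not_lt)

theorem medSubgrad_mul_sub_lamMedian (f : Fin N → ℝ) (i : Fin N) :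
    medSubgrad N lam f i * (f i - lamMedian N lam f) = asymAbs lam (f i - lamMedian N lam f) := by
  rcases lt_trichotomy (f i) (lamMedian N lam f) with h | h | h
  · rw [medSubgrad_of_lt_lamMedian h, asymAbs_of_neg (sub_neg.mpr h)]
    ring
  · rw [h, sub_self, mul_zero, asymAbs_of_nonneg le_rfl, mul_zero]
  · rw [medSubgrad_of_lamMedian_lt h, asymAbs_of_nonneg (sub_nonneg.mpr h.le)]

theorem medSubgrad_mem_Icc (hlam : 0 < lam + 1) (hk : ⌊(N : ℝ) / (lam + 1)⌋₊ < N)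
    (f : Fin N → ℝ) (i : Fin N) : medSubgrad N lam f i ∈ Set.Icc (-1) lam := by
  rcases lt_trichotomy (f i) (lamMedian N lam f) with h | h | h
  · rw [medSubgrad_of_lt_lamMedian h]
    exact ⟨le_rfl, by linarith⟩
  · have hpos : (0 : ℝ) < #{j | f j = lamMedian N lam f} := by
      exact_mod_cast card_eq_lamMedian_pos f hk
    have hsplit := card_filter_le_eq_card_filter_eq_add f (lamMedian N lam f)
    have htotal := card_filter_lt_add_card_filter_le f (lamMedian N lam f)
    have hlo := lam_add_one_mul_card_lamMedian_lt_le f hlam hk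
    have hhi := lt_lam_add_one_mul_card_lamMedian_le f hlam hk
    rw [Fintype.card_fin] at htotal
    rw [hsplit] at htotal hhi
    rify at htotal
    push_cast at hhi
    rw [medSubgrad_of_eq_lamMedian h, Set.mem_Icc, le_div_iff₀ hpos, div_le_iff₀ hpos]
    constructor <;> nlinarith
  · rw [medSubgrad_of_lamMedian_lt h]
    exact ⟨by linarith, le_rfl⟩

theorem sum_medSubgrad (hk : ⌊(N : ℝ) / (lam + 1)⌋₊ < N) (f : Fin N → ℝ) :
    ∑ i, medSubgrad N lam f i = 0 := by
  unfold medSubgrad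
  set m := lamMedian N lam f
  have hpos : (0 : ℝ) < #{j | f j = m} := by exact_mod_cast card_eq_lamMedian_pos f hk
  have hlt : univ.filter (fun i => ¬m < f i ∧ f i < m) = univ.filter (f · < m) :=
    filter_congr fun i _ => ⟨And.right, fun h => ⟨h.not_gt, h⟩⟩
  have heq : univ.filter (fun i => ¬m < f i ∧ ¬f i < m) = univ.filter (f · = m) :=
    filter_congr fun i _ => by simp only [not_lt, le_antisymm_iff]
  rw [sum_ite, sum_ite, filter_filter, filter_filter, hlt, heq]
  simp only [sum_const, nsmul_eq_mul]
  field_simp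
  ring

end medSubgrad

theorem balanceFun_subgradient_general (N : ℕ) (lam : ℝ) (hlam : 0 < lam)
    (hk : Nat.floor ((N : ℝ) / (lam + 1)) + 1 ≤ N) (f : Fin N → ℝ) :
    ∀ g : Fin N → ℝ,
      balanceFun N lam g - balanceFun N lam f ≥
        ∑ i, medSubgrad N lam f i * (g i - f i) := fun g =>
  sum_mul_sub_le_asymNorm_sub (medSubgrad_mem_Icc (by linarith) hk f) (sum_medSubgrad hk f)
    (medSubgrad_mul_sub_lamMedian f) g (lamMedian N lam g)

/-- Theorem 2, subgradient formula: the vector `v = medSubgrad f`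
is a subgradient of `B` at `f`: `B(g) − B(f) ≥ ⟨v, g − f⟩` for all `g ∈ ℝ^N`. -/
theorem balanceFun_subgradient (N : ℕ) (hN : 0 < N) (lam : ℝ) (hlam : 0 < lam)
    (hk : Nat.floor ((N : ℝ) / (lam + 1)) + 1 ≤ N) (f : Fin N → ℝ) :
    ∀ g : Fin N → ℝ,
      balanceFun N lam g - balanceFun N lam f ≥
        ∑ i, medSubgrad N lam f i * (g i - f i) :=
  balanceFun_subgradient_general N lam hlam hk f
end
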